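/- Let R be a commutative ring, G and H groups, V an R-module with an R-linear G-action, W an R-module with an R-linear H-action, and k ∈ ℕ. Let G × H act on V ⊗ W componentwise. Then the canonical R-linear isomorphism ⨂_{j ∈ Fin k} (V ⊗ W) ≅ (⨂_{j ∈ Fin k} V) ⊗ (⨂_{j ∈ Fin k} W) is equivariant for the group (G × H) ≀ Σ_k, where it acts on the left by the wreath tensor-power action on (V ⊗ W)^{⊗ k}, and on the right via the homomorphism ν followed by the componentwise wreath tensor-power actions of G ≀ Σ_k and H ≀ Σ_k. (This is the paper's claim that (E ⊠ F)^{⊠ k} ≅ E^{⊠ k} ⊠ F^{⊠ k} is a map of (Σ_i × Σ_j) ≀ Σ_k-objects, specialized to a point.) -/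

import Mathlib

open Equiv TensorProduct PiTensorProduct DirectSum

/-- The action of `Perm I` on `I → G` by `(σ • g) i = g (σ⁻¹ i)`. -/
def permAut (G : Type*) [Group G] (I : Type*) : Equiv.Perm I →* MulAut (I → G) where
  toFun σ :=
    { toFun := fun g => g ∘ σ.symm
      invFun := fun g => g ∘ σ
      left_inv := fun g => by funext i; simp
      right_inv := fun g => by funext i; simp
      map_mul' := fun g h => rfl }
  map_one' := by ext g i; rfl
  map_mul' := fun σ τ => by ext g i; rfl

/-- The wreath product `G ≀ Σ(I)`. -/
abbrev Wreath (G : Type*) [Group G] (I : Type*) :=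
  (I → G) ⋊[permAut G I] Equiv.Perm I

/-- The wreath tensor-power representation of `G ≀ Σ(I)` on `⨂ (i : I), V`:
the base `I → G` acts factorwise and `Perm I` permutes the tensor factors. -/
noncomputable def wreathRep (R : Type*) [CommRing R] {G : Type*} [Group G] (I : Type*)
    {V : Type*} [AddCommGroup V] [Module R V] (ρ : Representation R G V) :
    Representation R (Wreath G I) (⨂[R] _i : I, V) where
  toFun w :=
    (PiTensorProduct.map fun i => ρ (w.left i)).comp
      (PiTensorProduct.reindex R (fun _ : I => V) w.right).toLinearMap
  map_one' := by
    ext v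
    simp [Equiv.Perm.one_def]
  map_mul' := fun w₁ w₂ => by
    ext v
    simp [permAut, SemidirectProduct.mul_left, SemidirectProduct.mul_right,
      Equiv.Perm.mul_apply, Equiv.Perm.inv_def, Equiv.Perm.mul_def]

section Ind

variable (k : Type*) [CommRing k] {H G : Type*} [Group H] [Group G] (f : H →* G)
  (V : Type*) [AddCommGroup V] [Module k V] (ρ : Representation k H V)

/-- The submodule of relations defining the balanced tensor product
`MonoidAlgebra k G ⊗[MonoidAlgebra k H] V`. -/
noncomputable def indRel : Submodule k (MonoidAlgebra k G ⊗[k] V) :=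
  Submodule.span k {x | ∃ (a : MonoidAlgebra k G) (h : H) (v : V),
    x = (a * MonoidAlgebra.of k G (f h)) ⊗ₜ[k] v - a ⊗ₜ[k] (ρ h v)}

/-- The induced representation `Ind_H^G V = MonoidAlgebra k G ⊗_{MonoidAlgebra k H} V`,
realized as the quotient of `MonoidAlgebra k G ⊗[k] V` by the balancing relations. -/
abbrev Ind : Type _ := (MonoidAlgebra k G ⊗[k] V) ⧸ indRel k f V ρ

theorem indRel_le_comap (g : G) :
    indRel k f V ρ ≤ (indRel k f V ρ).comap
      (LinearMap.rTensor V (LinearMap.mulLeft k (MonoidAlgebra.of k G g))) := by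
  rw [indRel, Submodule.span_le]
  rintro x ⟨a, h, v, rfl⟩
  simp only [SetLike.mem_coe, Submodule.mem_comap, map_sub, LinearMap.rTensor_tmul,
    LinearMap.mulLeft_apply]
  rw [← mul_assoc]
  exact Submodule.subset_span ⟨MonoidAlgebra.of k G g * a, h, v, rfl⟩

/-- The `G`-action on `Ind_H^G V` by left multiplication on the first factor. -/
noncomputable def indRep : Representation k G (Ind k f V ρ) where
  toFun g := Submodule.mapQ _ _
      (LinearMap.rTensor V (LinearMap.mulLeft k (MonoidAlgebra.of k G g)))
      (indRel_le_comap k f V ρ g)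
  map_one' := by
    apply LinearMap.ext
    intro x
    induction x using Submodule.Quotient.induction_on with
    | _ y =>
      simp [Submodule.mapQ_apply, ← MonoidAlgebra.one_def, LinearMap.mulLeft_one]
  map_mul' := fun g₁ g₂ => by
    apply LinearMap.ext
    intro x
    induction x using Submodule.Quotient.induction_on with
    | _ y =>
      simp only [Submodule.mapQ_apply, _root_.map_mul, LinearMap.mulLeft_mul,
        LinearMap.rTensor_comp, LinearMap.comp_apply, Module.End.mul_apply]

end Ind

/-- The homomorphism `(G₁ × G₂) ≀ Σ_k → (G₁ ≀ Σ_k) × (G₂ ≀ Σ_k)`,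
`(g, σ) ↦ ((Prod.fst ∘ g, σ), (Prod.snd ∘ g, σ))`. -/
def wreathNu (G₁ G₂ : Type*) [Group G₁] [Group G₂] (k : ℕ) :
    Wreath (G₁ × G₂) (Fin k) →* Wreath G₁ (Fin k) × Wreath G₂ (Fin k) where
  toFun w := (⟨Prod.fst ∘ w.left, w.right⟩, ⟨Prod.snd ∘ w.left, w.right⟩)
  map_one' := by
    refine Prod.ext ?_ ?_ <;> ext x <;> simp
  map_mul' := fun w₁ w₂ => by
    refine Prod.ext ?_ ?_ <;> rfl



/-! The isomorphism `⨂_{Fin k} (V ⊗ W) ≅ (⨂_{Fin k} V) ⊗ (⨂_{Fin k} W)` is built by splitting off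
the last tensor factor and shuffling with `tensorTensorTensorComm`. It sends
`⨂ⱼ (vⱼ ⊗ wⱼ)` to `(⨂ⱼ vⱼ) ⊗ (⨂ⱼ wⱼ)`, and these elements span the source, so the isomorphism is
natural for factorwise maps of the form `fⱼ ⊗ gⱼ` and commutes with permutations of the factors.
An element `(g, σ)` of the wreath product acts by a permutation followed by a factorwise map of this
form, which gives the equivariance. -/

namespace PiTensorProduct

variable (R : Type*) [CommSemiring R]

section FinSucc

variable (M : Type*) [AddCommMonoid M] [Module R M] (k : ℕ)

noncomputable def finSuccEquiv :
    (⨂[R] _j : Fin (k + 1), M) ≃ₗ[R] (⨂[R] _j : Fin k, M) ⊗[R] M :=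
  (reindex R (fun _ => M) finSumFinEquiv.symm).trans <|
    (tmulEquiv R M).symm.trans (LinearEquiv.lTensor _ (subsingletonEquiv (0 : Fin 1)))

theorem finSuccEquiv_tprod (x : Fin (k + 1) → M) :
    finSuccEquiv R M k (tprod R x) = tprod R (fun j => x j.castSucc) ⊗ₜ[R] x (Fin.last k) := by
  simp only [finSuccEquiv, LinearEquiv.trans_apply, reindex_tprod, symm_symm,
    tmulEquiv_symm_apply, finSumFinEquiv_apply_left, finSumFinEquiv_apply_right,
    LinearEquiv.lTensor_tmul, subsingletonEquiv_apply_tprod]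
  rfl

end FinSucc

section Distrib

variable (V W : Type*) [AddCommMonoid V] [Module R V] [AddCommMonoid W] [Module R W]

noncomputable def tensorDistribEquiv : ∀ k : ℕ,
    (⨂[R] _j : Fin k, V ⊗[R] W) ≃ₗ[R] (⨂[R] _j : Fin k, V) ⊗[R] (⨂[R] _j : Fin k, W)
  | 0 =>
    (isEmptyEquiv (Fin 0)).trans <|
      (TensorProduct.lid R R).symm.trans
        (TensorProduct.congr (isEmptyEquiv (Fin 0)).symm (isEmptyEquiv (Fin 0)).symm)
  | k + 1 =>
    (finSuccEquiv R (V ⊗[R] W) k).trans <|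
      (TensorProduct.congr (tensorDistribEquiv k) (LinearEquiv.refl R (V ⊗[R] W))).trans <|
        (tensorTensorTensorComm R _ _ V W).trans
          (TensorProduct.congr (finSuccEquiv R V k).symm (finSuccEquiv R W k).symm)

theorem tensorDistribEquiv_tprod : ∀ (k : ℕ) (v : Fin k → V) (w : Fin k → W),
    tensorDistribEquiv R V W k (tprod R fun j => v j ⊗ₜ[R] w j) = tprod R v ⊗ₜ[R] tprod R w
  | 0, v, w => by
    simp only [tensorDistribEquiv, LinearEquiv.trans_apply, isEmptyEquiv_apply_tprod,
      TensorProduct.lid_symm_apply, congr_tmul, isEmptyEquiv_symm_apply, one_smul]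
    congr 1 <;> congr 1 <;> exact Subsingleton.elim _ _
  | k + 1, v, w => by
    simp only [tensorDistribEquiv, LinearEquiv.trans_apply, finSuccEquiv_tprod, congr_tmul,
      LinearEquiv.refl_apply, tensorDistribEquiv_tprod k, tensorTensorTensorComm_tmul]
    congr 1 <;> rw [LinearEquiv.symm_apply_eq, finSuccEquiv_tprod]

theorem tensorDistribEquiv_symm_tprod_tmul (k : ℕ) (v : Fin k → V) (w : Fin k → W) :
    (tensorDistribEquiv R V W k).symm (tprod R v ⊗ₜ[R] tprod R w) =
      tprod R fun j => v j ⊗ₜ[R] w j := by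
  rw [LinearEquiv.symm_apply_eq, tensorDistribEquiv_tprod]

variable {R V W}

theorem linearMap_ext_tprod_tmul {k : ℕ} {M : Type*} [AddCommMonoid M] [Module R M]
    {f g : (⨂[R] _j : Fin k, V ⊗[R] W) →ₗ[R] M}
    (h : ∀ (v : Fin k → V) (w : Fin k → W),
      f (tprod R fun j => v j ⊗ₜ[R] w j) = g (tprod R fun j => v j ⊗ₜ[R] w j)) :
    f = g := by
  rw [← LinearMap.cancel_right (tensorDistribEquiv R V W k).symm.surjective]
  ext v w
  simpa [tensorDistribEquiv_symm_tprod_tmul] using h v w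

theorem tensorDistribEquiv_comp_map {k : ℕ} {V' W' : Type*} [AddCommMonoid V'] [Module R V']
    [AddCommMonoid W'] [Module R W'] (f : Fin k → V →ₗ[R] V') (g : Fin k → W →ₗ[R] W') :
    (tensorDistribEquiv R V' W' k).toLinearMap ∘ₗ map (fun j => TensorProduct.map (f j) (g j)) =
      TensorProduct.map (map f) (map g) ∘ₗ (tensorDistribEquiv R V W k).toLinearMap :=
  linearMap_ext_tprod_tmul fun v w => by simp [tensorDistribEquiv_tprod]

theorem tensorDistribEquiv_comp_reindex {k : ℕ} (σ : Perm (Fin k)) :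
    (tensorDistribEquiv R V W k).toLinearMap ∘ₗ (reindex R (fun _ => V ⊗[R] W) σ).toLinearMap =
      TensorProduct.map (reindex R (fun _ => V) σ).toLinearMap
          (reindex R (fun _ => W) σ).toLinearMap ∘ₗ
        (tensorDistribEquiv R V W k).toLinearMap :=
  linearMap_ext_tprod_tmul fun v w => by simp [tensorDistribEquiv_tprod]

end Distrib

end PiTensorProduct

theorem wreathRep_apply (R : Type*) [CommRing R] {G : Type*} [Group G] (I : Type*)
    {V : Type*} [AddCommGroup V] [Module R V] (ρ : Representation R G V) (u : Wreath G I) :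
    wreathRep R I ρ u =
      map (fun i => ρ (u.left i)) ∘ₗ (reindex R (fun _ : I => V) u.right).toLinearMap :=
  rfl

theorem statement10 (R : Type*) [CommRing R] (G H : Type*) [Group G] [Group H]
    (V W : Type*) [AddCommGroup V] [Module R V] [AddCommGroup W] [Module R W]
    (ρ : Representation R G V) (τ : Representation R H W) (k : ℕ) :
    ∃ Φ : (⨂[R] _j : Fin k, (V ⊗[R] W)) ≃ₗ[R]
        (⨂[R] _j : Fin k, V) ⊗[R] (⨂[R] _j : Fin k, W),
      (∀ (v : Fin k → V) (w : Fin k → W),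
        Φ (PiTensorProduct.tprod R fun j => v j ⊗ₜ[R] w j) =
          (PiTensorProduct.tprod R v) ⊗ₜ[R] (PiTensorProduct.tprod R w)) ∧
      ∀ (u : Wreath (G × H) (Fin k)) (x : ⨂[R] _j : Fin k, (V ⊗[R] W)),
        Φ (wreathRep R (Fin k)
            (Representation.tprod (ρ.comp (MonoidHom.fst G H)) (τ.comp (MonoidHom.snd G H)))
            u x) =
          TensorProduct.map (wreathRep R (Fin k) ρ (wreathNu G H k u).1)
            (wreathRep R (Fin k) τ (wreathNu G H k u).2) (Φ x) := by
  refine ⟨tensorDistribEquiv R V W k, tensorDistribEquiv_tprod R V W k, fun u x => ?_⟩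
  have h : (tensorDistribEquiv R V W k).toLinearMap ∘ₗ wreathRep R (Fin k)
        (Representation.tprod (ρ.comp (MonoidHom.fst G H)) (τ.comp (MonoidHom.snd G H))) u =
      TensorProduct.map (wreathRep R (Fin k) ρ (wreathNu G H k u).1)
        (wreathRep R (Fin k) τ (wreathNu G H k u).2) ∘ₗ (tensorDistribEquiv R V W k).toLinearMap := by
    simp only [wreathRep_apply, Representation.tprod_apply, MonoidHom.comp_apply,
      MonoidHom.coe_fst, MonoidHom.coe_snd]
    rw [← LinearMap.comp_assoc, tensorDistribEquiv_comp_map, LinearMap.comp_assoc,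
      tensorDistribEquiv_comp_reindex, ← LinearMap.comp_assoc, ← TensorProduct.map_comp]
    rfl
  exact LinearMap.congr_fun h x
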